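/- If x ∈ Γ_k^n and x_i ≥ x_j, then s_{k-1}(x|i) ≤ s_{k-1}(x|j). -/

import Mathlib

open Finset

/-- The `k`-th elementary symmetric polynomial of `x ∈ ℝⁿ`. -/
noncomputable def esymm (n k : ℕ) (x : Fin n → ℝ) : ℝ :=
  ∑ A ∈ Finset.powersetCard k (Finset.univ : Finset (Fin n)), ∏ i ∈ A, x i

/-- The Gårding cone `Γₖⁿ = {x : sₗ(x) > 0, l = 1,…,k}`. -/
def GammaK (n k : ℕ) (x : Fin n → ℝ) : Prop :=
  ∀ l, 1 ≤ l → l ≤ k → 0 < esymm n l x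

/-!
The heart of the matter is that deleting a coordinate maps `Γ_{k+1}` into `Γ_k`. Granting this,
`s_{k-1}(x|j) - s_{k-1}(x|i) = (x_i - x_j) s_{k-2}(y)`, where `y` is `x` with both coordinates
`i, j` deleted, and `s_{k-2}(y) > 0` by deleting twice.

Deletion is proved by induction on `k`. Suppose `a :: s ∈ Γ_{k+2}` but `s_{k+1}(s) ≤ 0`. Since
`s_l(s + t)` is a polynomial in `t` whose coefficients are nonnegative multiples of
`s_0(s), …, s_l(s)`, translating every entry by `t ≥ 0` preserves `Γ_{k+2}`, and by the
intermediate value theorem some `r ≥ 0` gives `s_{k+1}(s + r) = 0`. Induction gives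
`s_k(s + r) > 0`, so Newton's inequality `s_k s_{k+2} ≤ s_{k+1}²` forces `s_{k+2}(s + r) ≤ 0`, and
then `s_{k+2}(a + r :: s + r) = s_{k+2}(s + r) + (a + r) s_{k+1}(s + r) ≤ 0`, a contradiction.
Newton's inequality itself comes from `2 c₀ c₂ ≤ c₁²` for real-rooted polynomials, applied to a
derivative of `∏ (X + a)`, which stays real-rooted by Rolle's theorem.
-/

open Polynomial

namespace Multiset

section CommSemiring

variable {R : Type*} [CommSemiring R]

theorem esymm_zero (s : Multiset R) : s.esymm 0 = 1 := by
  simp [esymm, powersetCard_zero_left]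

theorem esymm_cons_succ (a : R) (s : Multiset R) (k : ℕ) :
    (a ::ₘ s).esymm (k + 1) = s.esymm (k + 1) + a * s.esymm k := by
  simp [esymm, powersetCard_cons, sum_map_mul_left]

theorem esymm_eq_zero_of_card_lt {s : Multiset R} {k : ℕ} (h : card s < k) : s.esymm k = 0 := by
  simp [esymm, powersetCard_eq_empty _ h]

theorem esymm_pos_of_forall_pos [PartialOrder R] [IsStrictOrderedRing R] {s : Multiset R}
    (h : ∀ a ∈ s, 0 < a) {k : ℕ} (hk : k ≤ card s) : 0 < s.esymm k := by
  induction s using Multiset.induction_on generalizing k with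
  | empty => simp_all [esymm_zero]
  | cons a s ih =>
    have hs : ∀ b ∈ s, 0 < b := fun b hb => h b (mem_cons_of_mem hb)
    cases k with
    | zero => simp [esymm_zero]
    | succ k =>
      rw [card_cons] at hk
      have hnext : 0 ≤ s.esymm (k + 1) := by
        rcases Nat.lt_or_ge (card s) (k + 1) with hlt | hge
        · exact (esymm_eq_zero_of_card_lt hlt).ge
        · exact (ih hs hge).le
      rw [esymm_cons_succ]
      exact add_pos_of_nonneg_of_pos hnext (mul_pos (h a (mem_cons_self a s)) (ih hs (by omega)))

end CommSemiring

section CommRing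

variable {R : Type*} [CommRing R]

theorem prod_X_add_C_eq_prod_X_sub_C_neg (s : Multiset R) :
    (s.map fun a => X + C a).prod = ((s.map Neg.neg).map fun a => X - C a).prod := by
  simp [map_map, sub_eq_add_neg]

theorem natDegree_prod_X_add_C [Nontrivial R] (s : Multiset R) :
    (s.map fun a => X + C a).prod.natDegree = card s := by
  rw [prod_X_add_C_eq_prod_X_sub_C_neg, natDegree_multiset_prod_X_sub_C_eq_card, card_map]

theorem card_roots_prod_X_add_C_eq_natDegree [IsDomain R] (s : Multiset R) :
    card (s.map fun a => X + C a).prod.roots = (s.map fun a => X + C a).prod.natDegree := by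
  rw [prod_X_add_C_eq_prod_X_sub_C_neg, roots_multiset_prod_X_sub_C,
    natDegree_multiset_prod_X_sub_C_eq_card]

theorem esymm_map_add_eq_eval_hasseDeriv (s : Multiset R) (t : R) {l : ℕ} (hl : l ≤ card s) :
    (s.map (· + t)).esymm l = (hasseDeriv (card s - l) (s.map fun a => X + C a).prod).eval t := by
  have h := prod_X_add_C_coeff (s.map (· + t)) (k := card s - l) (by simp)
  rw [card_map, Nat.sub_sub_self hl] at h
  rw [← h, ← taylor_coeff, taylor_apply, multiset_prod_comp, map_map, map_map]
  congr 2
  refine map_congr rfl fun a _ => ?_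
  simp only [Function.comp_apply, add_comp, X_comp, C_comp, C_add]
  ring

end CommRing

end Multiset

namespace Polynomial

theorem coeff_zero_le_eval {R : Type*} [CommSemiring R] [PartialOrder R] [IsOrderedRing R]
    {p : R[X]} (hp : ∀ j, 0 ≤ p.coeff j) {t : R} (ht : 0 ≤ t) : p.coeff 0 ≤ p.eval t := by
  have hterm := Finset.single_le_sum (f := fun j => p.coeff j * t ^ j)
    (fun j _ => mul_nonneg (hp j) (pow_nonneg ht j)) (Finset.mem_range.2 p.natDegree.succ_pos)
  rw [eval_eq_sum_range]
  simpa using hterm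

section OrderedRing

variable {R : Type*} [CommRing R] [LinearOrder R] [IsStrictOrderedRing R]

theorem two_mul_coeff_zero_mul_coeff_two_le_sq_prod_X_sub_C (s : Multiset R) :
    2 * (s.map fun r => X - C r).prod.coeff 0 * (s.map fun r => X - C r).prod.coeff 2 ≤
      (s.map fun r => X - C r).prod.coeff 1 ^ 2 := by
  induction s using Multiset.induction_on with
  | empty => simp [coeff_one]
  | cons r s ih =>
    simp only [Multiset.map_cons, Multiset.prod_cons, sub_mul, coeff_sub, coeff_X_mul,
      coeff_C_mul, mul_coeff_zero, coeff_X_zero, coeff_C_zero, zero_mul, zero_sub]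
    generalize (s.map fun r => X - C r).prod = f at ih ⊢
    nlinarith [mul_le_mul_of_nonneg_left ih (sq_nonneg r), sq_nonneg (f.coeff 0)]

theorem two_mul_coeff_zero_mul_coeff_two_le_sq {p : R[X]}
    (hp : Multiset.card p.roots = p.natDegree) :
    2 * p.coeff 0 * p.coeff 2 ≤ p.coeff 1 ^ 2 := by
  rw [← C_leadingCoeff_mul_prod_multiset_X_sub_C hp]
  simp only [coeff_C_mul]
  nlinarith [mul_le_mul_of_nonneg_left (two_mul_coeff_zero_mul_coeff_two_le_sq_prod_X_sub_C
    p.roots) (sq_nonneg p.leadingCoeff)]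

end OrderedRing

theorem card_roots_derivative_eq_natDegree {p : ℝ[X]}
    (hp : Multiset.card p.roots = p.natDegree) :
    Multiset.card (derivative p).roots = (derivative p).natDegree := by
  have := card_roots_le_derivative p
  have := card_roots' (derivative p)
  have := natDegree_derivative_le p
  omega

theorem card_roots_iterate_derivative_eq_natDegree {p : ℝ[X]}
    (hp : Multiset.card p.roots = p.natDegree) (m : ℕ) :
    Multiset.card (derivative^[m] p).roots = (derivative^[m] p).natDegree := by
  induction m with
  | zero => exact hp
  | succ m ih =>
    rw [Function.iterate_succ_apply']
    exact card_roots_derivative_eq_natDegree ih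

end Polynomial

namespace Multiset

theorem esymm_mul_esymm_le_sq (s : Multiset ℝ) (l : ℕ) :
    s.esymm l * s.esymm (l + 2) ≤ s.esymm (l + 1) ^ 2 := by
  rcases Nat.lt_or_ge (card s) (l + 2) with hlt | hge
  · rw [esymm_eq_zero_of_card_lt hlt, mul_zero]
    positivity
  obtain ⟨m, hm⟩ : ∃ m, card s = l + 2 + m := ⟨_, (Nat.add_sub_of_le hge).symm⟩
  -- `q` is real-rooted, and its coefficients in degrees 0, 1, 2 are positive multiples of
  -- `s.esymm (l + 2)`, `s.esymm (l + 1)`, `s.esymm l`.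
  set q := derivative^[m] (s.map fun a => X + C a).prod
  have hcoeff (j : ℕ) (hj : j ≤ l + 2) :
      q.coeff j = ((m + j).descFactorial m : ℝ) * s.esymm (l + 2 - j) := by
    rw [coeff_iterate_derivative, prod_X_add_C_coeff _ (by omega), nsmul_eq_mul, hm,
      Nat.add_sub_add_right, add_comm j m]
  have hq := two_mul_coeff_zero_mul_coeff_two_le_sq
    (card_roots_iterate_derivative_eq_natDegree (card_roots_prod_X_add_C_eq_natDegree s) m)
  rw [hcoeff 0 (by omega), hcoeff 1 (by omega), hcoeff 2 (by omega), add_zero, Nat.sub_zero,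
    Nat.add_sub_cancel, show l + 2 - 1 = l + 1 by omega] at hq
  have hD1 : ((m + 1).descFactorial m : ℝ) = (m + 1) * m.descFactorial m := by
    exact_mod_cast (by simpa using Nat.succ_descFactorial m m)
  have hD2 : ((m + 2).descFactorial m : ℝ) = (m + 2) * ((m + 1) * m.descFactorial m) / 2 := by
    rw [eq_div_iff two_ne_zero, ← hD1]
    have h := Nat.succ_descFactorial (m + 1) m
    rw [show m + 1 + 1 - m = 2 by omega, mul_comm] at h
    exact_mod_cast h
  have hD0 : (0 : ℝ) < (m + 1) * (m.descFactorial m : ℝ) ^ 2 := by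
    rw [Nat.descFactorial_self]
    positivity
  rw [hD1, hD2] at hq
  have hweighted : (m + 2) * (s.esymm l * s.esymm (l + 2)) ≤ (m + 1) * s.esymm (l + 1) ^ 2 :=
    le_of_mul_le_mul_left (by linear_combination hq) hD0
  rcases le_or_gt (s.esymm l * s.esymm (l + 2)) 0 with hneg | hpos
  · exact hneg.trans (sq_nonneg _)
  · nlinarith

theorem continuous_esymm_map_add (s : Multiset ℝ) (l : ℕ) :
    Continuous fun t => (s.map (· + t)).esymm l := by
  rcases le_or_gt l (card s) with hl | hl
  · simp_rw [esymm_map_add_eq_eval_hasseDeriv s _ hl]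
    exact Polynomial.continuous _
  · have h0 (t : ℝ) : (s.map (· + t)).esymm l = 0 := esymm_eq_zero_of_card_lt (by rwa [card_map])
    simp_rw [h0]
    exact continuous_const

theorem exists_nonneg_esymm_map_add_eq_zero {s : Multiset ℝ} {l : ℕ} (hl : l ≤ card s)
    (hs : s.esymm l ≤ 0) : ∃ r, 0 ≤ r ∧ (s.map (· + r)).esymm l = 0 := by
  obtain ⟨T, hT0, hT⟩ := ((Filter.eventually_ge_atTop 0).and
    ((Filter.eventually_all_finset s.toFinset).2 fun b _ => Filter.eventually_gt_atTop (-b))).exists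
  have hpos : 0 < (s.map (· + T)).esymm l := by
    refine esymm_pos_of_forall_pos ?_ (by rwa [card_map])
    simp only [mem_map]
    rintro _ ⟨b, hb, rfl⟩
    linarith [hT b (mem_toFinset.2 hb)]
  obtain ⟨r, ⟨hr0, -⟩, hr⟩ := intermediate_value_Icc hT0
    (continuous_esymm_map_add s l).continuousOn ⟨by simpa using hs, hpos.le⟩
  exact ⟨r, hr0, hr⟩

end Multiset

def InGammaCone (k : ℕ) (s : Multiset ℝ) : Prop :=
  ∀ l ≤ k, 0 < s.esymm l

namespace InGammaCone

open Multiset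

theorem mono {k : ℕ} {s : Multiset ℝ} (h : InGammaCone k s) {k' : ℕ} (hk : k' ≤ k) :
    InGammaCone k' s :=
  fun l hl => h l (hl.trans hk)

theorem le_card {k : ℕ} {s : Multiset ℝ} (h : InGammaCone k s) : k ≤ card s := by
  by_contra hlt
  exact (h k le_rfl).ne' (esymm_eq_zero_of_card_lt (by omega))

theorem map_add {k : ℕ} {s : Multiset ℝ} (h : InGammaCone k s) {t : ℝ} (ht : 0 ≤ t) :
    InGammaCone k (s.map (· + t)) := by
  intro l hl
  have hls : l ≤ card s := hl.trans h.le_card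
  rw [esymm_map_add_eq_eval_hasseDeriv s t hls]
  refine lt_of_lt_of_le ?_ (coeff_zero_le_eval (fun j => ?_) ht)
  · rw [hasseDeriv_coeff, zero_add, Nat.choose_self, Nat.cast_one, one_mul,
      Multiset.prod_X_add_C_coeff _ (Nat.sub_le _ _), Nat.sub_sub_self hls]
    exact h l hl
  · rw [hasseDeriv_coeff]
    refine mul_nonneg (Nat.cast_nonneg _) ?_
    rcases le_or_gt (j + (card s - l)) (card s) with hj | hj
    · rw [Multiset.prod_X_add_C_coeff _ hj]
      exact (h _ (by omega)).le
    · rw [coeff_eq_zero_of_natDegree_lt (by rwa [natDegree_prod_X_add_C])]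

theorem of_cons {k : ℕ} : ∀ {a : ℝ} {s : Multiset ℝ}, InGammaCone (k + 1) (a ::ₘ s) →
    InGammaCone k s := by
  induction k with
  | zero =>
    intro a s _ l hl
    obtain rfl : l = 0 := by omega
    simp [esymm_zero]
  | succ k ih =>
    intro a s h l hl
    rcases Nat.lt_or_eq_of_le hl with hlt | rfl
    · exact ih (h.mono (by omega)) l (by omega)
    refine lt_of_not_ge fun hneg => ?_
    have hcard : k + 1 ≤ card s := by
      simpa using h.le_card
    obtain ⟨r, hr0, hr⟩ := exists_nonneg_esymm_map_add_eq_zero hcard hneg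
    have hshift := h.map_add hr0
    rw [Multiset.map_cons] at hshift
    have hk := ih (hshift.mono (by omega)) k le_rfl
    have hnewton := (s.map (· + r)).esymm_mul_esymm_le_sq k
    have htop := hshift (k + 2) le_rfl
    rw [esymm_cons_succ, hr, mul_zero, add_zero] at htop
    rw [hr] at hnewton
    nlinarith

end InGammaCone

theorem Finset.map_val_eq_cons_cons {ι α : Type*} [DecidableEq ι] {s : Finset ι} (f : ι → α)
    {i j : ι} (hi : i ∈ s) (hj : j ∈ s) (hij : i ≠ j) :
    s.val.map f = f i ::ₘ f j ::ₘ ((s.erase i).erase j).val.map f := by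
  rw [← Multiset.map_cons, ← Multiset.map_cons, Finset.erase_val,
    Multiset.cons_erase (Finset.mem_erase.2 ⟨hij.symm, hj⟩), Finset.erase_val,
    Multiset.cons_erase hi]

theorem GammaK.inGammaCone {n k : ℕ} {x : Fin n → ℝ} (hx : GammaK n k x) :
    InGammaCone k (univ.val.map x) := by
  intro l hl
  rcases Nat.eq_zero_or_pos l with rfl | hl0
  · simp [Multiset.esymm_zero]
  · rw [Finset.esymm_map_val]
    exact hx l hl0 hl

theorem esymm_update_zero_succ {n : ℕ} (x : Fin n → ℝ) {i j : Fin n} (hij : i ≠ j) (l : ℕ) :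
    esymm n (l + 1) (Function.update x i 0) =
      (((univ.erase i).erase j).val.map x).esymm (l + 1) +
        x j * (((univ.erase i).erase j).val.map x).esymm l := by
  have hrest : ((univ.erase i).erase j).val.map (Function.update x i 0) =
      ((univ.erase i).erase j).val.map x :=
    Multiset.map_congr rfl fun m hm => Function.update_of_ne
      (ne_of_mem_erase (mem_of_mem_erase (show m ∈ (univ.erase i).erase j from hm))) _ _
  rw [esymm, ← Finset.esymm_map_val, map_val_eq_cons_cons _ (mem_univ i) (mem_univ j) hij,
    Function.update_self, Function.update_of_ne hij.symm, hrest, Multiset.esymm_cons_succ,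
    zero_mul, add_zero, Multiset.esymm_cons_succ]

theorem esymm_update_mono_general (n k : ℕ) (x : Fin n → ℝ) (hx : GammaK n k x)
    (i j : Fin n) (hij : x j ≤ x i) :
    esymm n (k - 1) (Function.update x i 0) ≤ esymm n (k - 1) (Function.update x j 0) := by
  rcases eq_or_ne i j with rfl | hne
  · rfl
  obtain hk | ⟨l, rfl⟩ : k ≤ 1 ∨ ∃ l, k = l + 2 := by
    rcases k with _ | _ | l <;> simp
  · simp [Nat.sub_eq_zero_of_le hk, esymm]
  have hpos : 0 < (((univ.erase i).erase j).val.map x).esymm l := by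
    have hcone := hx.inGammaCone
    rw [map_val_eq_cons_cons x (mem_univ i) (mem_univ j) hne] at hcone
    exact hcone.of_cons.of_cons l le_rfl
  rw [show l + 2 - 1 = l + 1 by omega, esymm_update_zero_succ x hne,
    esymm_update_zero_succ x hne.symm, erase_right_comm (a := j)]
  linarith [mul_le_mul_of_nonneg_right hij hpos.le]

/-- If x ∈ Γₖⁿ and xᵢ ≥ xⱼ, then s_{k-1}(x|i) ≤ s_{k-1}(x|j). -/
theorem esymm_update_mono (n k : ℕ) (hk : 1 ≤ k) (x : Fin n → ℝ) (hx : GammaK n k x)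
    (i j : Fin n) (hij : x j ≤ x i) :
    esymm n (k - 1) (Function.update x i 0) ≤ esymm n (k - 1) (Function.update x j 0) :=
  esymm_update_mono_general n k x hx i j hij
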